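/- Let H = ℚ[z₁, z₂, …] with derivation ∂ given by ∂(z_j) = z_{j-1} for j > 1 and ∂(z₁) = 0 (the case r = 0). Then the image of ∂ equals the kernel of the constant-term homomorphism ε: H → ℚ, i.e., ∂ is surjective onto polynomials with zero constant term, and ε ∘ ∂ = 0. -/

import Mathlib

/-!
The inclusion `⊆` holds because no `D (X i)` has a constant term. For `⊇`, give `X i` the
weight `i + 1`, so that `D` lowers the weight of a monomial by one. The Leibniz rule
`X j * Q = D (X (j + 1) * Q) - X (j + 1) * D Q` then shows, by induction on the weight of the
monomial `m`, that every `X j * m` lies in the range of `D`; these products span the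
polynomials without constant term.
-/

open MvPolynomial

theorem Derivation.apply_mul_mem_range_of_mul_apply_mem {R A : Type*} [CommRing R] [CommRing A]
    [Algebra R A] (D : Derivation R A A) {a b : A}
    (h : a * D b ∈ LinearMap.range (D : A →ₗ[R] A)) :
    D a * b ∈ LinearMap.range (D : A →ₗ[R] A) := by
  have hab : D a * b = D (a * b) - a * D b := by
    rw [D.leibniz, smul_eq_mul, smul_eq_mul]
    ring
  rw [hab]
  exact sub_mem (LinearMap.mem_range_self _ _) h

theorem Finsupp.weight_sub_single_succ_add_single_lt {d : ℕ →₀ ℕ} {k : ℕ}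
    (hk : d (k + 1) ≠ 0) :
    weight (fun i => i + 1) (d - single (k + 1) 1 + single k 1) < weight (fun i => i + 1) d := by
  have hsplit : d - single (k + 1) 1 + single (k + 1) 1 = d :=
    tsub_add_cancel_of_le (single_le_iff.mpr (Nat.one_le_iff_ne_zero.mpr hk))
  conv_rhs => rw [← hsplit]
  simp only [map_add, weight_single, one_smul]
  omega

namespace MvPolynomial

section CommSemiring

variable {σ R : Type*} [CommSemiring R]

theorem derivation_monomial {A : Type*} [AddCommMonoid A] [Module R A]
    [Module (MvPolynomial σ R) A] [IsScalarTower R (MvPolynomial σ R) A]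
    (D : Derivation R (MvPolynomial σ R) A) (s : σ →₀ ℕ) (r : R) :
    D (monomial s r) =
      r • s.sum fun i k => monomial (s - Finsupp.single i 1) (k : R) • D (X i) := by
  rw [← mkDerivation_monomial]
  congr 1
  exact derivation_ext fun i => (mkDerivation_X R (fun i => D (X i)) i).symm

theorem constantCoeff_derivation_eq_zero
    {D : Derivation R (MvPolynomial σ R) (MvPolynomial σ R)}
    (hX : ∀ i, constantCoeff (D (X i)) = 0) (P : MvPolynomial σ R) :
    constantCoeff (D P) = 0 := by
  induction P using MvPolynomial.induction_on with
  | C a => rw [derivation_C, map_zero]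
  | add p q hp hq => rw [map_add, map_add, hp, hq, add_zero]
  | mul_X p i hp => simp [D.leibniz, hp, hX]

theorem mem_of_forall_X_mul_monomial_mem {N : Submodule R (MvPolynomial σ R)}
    (hN : ∀ i d c, X i * monomial d c ∈ N) {P : MvPolynomial σ R} (hP : constantCoeff P = 0) :
    P ∈ N := by
  rw [P.as_sum]
  refine Submodule.sum_mem _ fun d hd => ?_
  have hd0 : d ≠ 0 := by
    rintro rfl
    exact mem_support_iff.mp hd (by rwa [← constantCoeff_eq])
  obtain ⟨i, hi⟩ := Finsupp.support_nonempty_iff.mpr hd0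
  have hsplit : Finsupp.single i 1 + (d - Finsupp.single i 1) = d :=
    add_tsub_cancel_of_le (Finsupp.single_le_iff.mpr (Nat.one_le_iff_ne_zero.mpr
      (Finsupp.mem_support_iff.mp hi)))
  rw [← hsplit, monomial_single_add, pow_one]
  exact hN _ _ _

end CommSemiring

theorem X_mul_monomial_mem_range {R : Type*} [CommRing R]
    {D : Derivation R (MvPolynomial ℕ R) (MvPolynomial ℕ R)}
    (hD0 : D (X 0) = 0) (hD : ∀ j, D (X (j + 1)) = X j)
    (j : ℕ) (d : ℕ →₀ ℕ) (c : R) :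
    X j * monomial d c ∈
      LinearMap.range (D : MvPolynomial ℕ R →ₗ[R] MvPolynomial ℕ R) := by
  induction hw : Finsupp.weight (fun i => i + 1) d using Nat.strong_induction_on
    generalizing j d c with
  | _ w ih =>
    rw [← hD j]
    refine D.apply_mul_mem_range_of_mul_apply_mem ?_
    rw [derivation_monomial, mul_smul_comm, Finsupp.sum, Finset.mul_sum]
    refine Submodule.smul_mem _ _ (Submodule.sum_mem _ fun i hi => ?_)
    rcases i with _ | k
    · simp [hD0]
    · rw [hD k, smul_eq_mul, ← pow_one (X k), ← monomial_add_single]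
      exact ih _ (hw ▸ Finsupp.weight_sub_single_succ_add_single_lt
        (Finsupp.mem_support_iff.mp hi)) _ _ _ rfl

end MvPolynomial

/-- Let `H = ℚ[z₁, z₂, …]` (variable `X j` stands for `z_{j+1}`) with derivation
`∂(z_j) = z_{j-1}` for `j > 1` and `∂(z₁) = 0`. Then the image of `∂` equals the
kernel of the constant-term homomorphism `ε`. -/
theorem deriv_range_eq_ker_constantCoeff
    (D : Derivation ℚ (MvPolynomial ℕ ℚ) (MvPolynomial ℕ ℚ))
    (hD1 : D (X 0) = 0) (hD : ∀ j : ℕ, D (X (j + 1)) = X j) :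
    Set.range ⇑D = {P : MvPolynomial ℕ ℚ | constantCoeff P = 0} := by
  ext P
  constructor
  · rintro ⟨Q, rfl⟩
    refine constantCoeff_derivation_eq_zero (fun i => ?_) Q
    cases i <;> simp [hD1, hD]
  · exact mem_of_forall_X_mul_monomial_mem (X_mul_monomial_mem_range hD1 hD)
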